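/- With H_i = E_i/√(I_i) orthonormal for ⟨,⟩^I and K: so(3) → so(3) defined by ⟨K(u),v⟩^I = −⟨u, ½Σ_i(∇^I_{ad_v H_i}H_i + ∇^I_{H_i}(ad_v H_i))⟩^I for all v, one has K(u) = −(1/(2I_1I_2I_3)) ((I_2−I_3)² u_1 E_1 + (I_3−I_1)² u_2 E_2 + (I_1−I_2)² u_3 E_3). -/

import Mathlib

open Matrix

noncomputable section

/-- Basis element `E₁` of `so(3)`. -/
def E1 : Matrix (Fin 3) (Fin 3) ℝ := !![0,0,0; 0,0,-1; 0,1,0]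

/-- Basis element `E₂` of `so(3)`. -/
def E2 : Matrix (Fin 3) (Fin 3) ℝ := !![0,0,1; 0,0,0; -1,0,0]

/-- Basis element `E₃` of `so(3)`. -/
def E3 : Matrix (Fin 3) (Fin 3) ℝ := !![0,-1,0; 1,0,0; 0,0,0]

/-- The element of `so(3)` with hat coordinates `a = (a₁,a₂,a₃)`. -/
def ofHat (a : Fin 3 → ℝ) : Matrix (Fin 3) (Fin 3) ℝ := a 0 • E1 + a 1 • E2 + a 2 • E3

/-- Matrix commutator. -/
def bracket (X Y : Matrix (Fin 3) (Fin 3) ℝ) : Matrix (Fin 3) (Fin 3) ℝ := X * Y - Y * X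

/-- Hat coordinates of a skew-symmetric matrix. -/
def hat (v : Matrix (Fin 3) (Fin 3) ℝ) : Fin 3 → ℝ := ![v 2 1, v 0 2, v 1 0]

/-- The weighted inner product `⟨v,w⟩^I = Σ_j I_j v_j w_j` on `so(3)` in hat coordinates. -/
def innerI (I : Fin 3 → ℝ) (v w : Matrix (Fin 3) (Fin 3) ℝ) : ℝ :=
  ∑ j, I j * hat v j * hat w j

/-- The orthonormal basis `H_i = E_i / √(I_i)` of `(so(3), ⟨,⟩^I)`. -/
def Hb (I : Fin 3 → ℝ) (i : Fin 3) : Matrix (Fin 3) (Fin 3) ℝ :=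
  (Real.sqrt (I i))⁻¹ • (![E1, E2, E3] i)

/-!
In hat coordinates `so(3)` is `ℝ³` with the cross product as bracket. Adding the Koszul formulas
for `∇_X Y` and `∇_Y X`, the bracket `[X, Y]` cancels and `⟨u, ∇_X Y + ∇_Y X⟩ = ⟨[u,Y],X⟩ + ⟨[u,X],Y⟩`.
For `X = [v, H_i]`, `Y = H_i` this is quadratic in `H_i`, so `H_i = E_i/√I_i` contributes
`1/I_i` times the same expression for `E_i`. Summing gives `⟨K u, v⟩` as an explicit rational
function, and nondegeneracy of `⟨,⟩^I` reads off `K u`.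
-/

lemma hat_ofHat (a : Fin 3 → ℝ) : hat (ofHat a) = a := by
  funext j; fin_cases j <;> simp [hat, ofHat, E1, E2, E3]

lemma ofHat_eq_of (a : Fin 3 → ℝ) :
    ofHat a = !![0, -a 2, a 1; a 2, 0, -a 0; -a 1, a 0, 0] := by
  ext i j
  fin_cases i <;> fin_cases j <;> simp [ofHat, E1, E2, E3]

lemma ofHat_smul (t : ℝ) (a : Fin 3 → ℝ) : ofHat (t • a) = t • ofHat a := by
  simp only [ofHat, Pi.smul_apply, smul_add, smul_smul, smul_eq_mul]

lemma bracket_ofHat (a b : Fin 3 → ℝ) : bracket (ofHat a) (ofHat b) = ofHat (a ⨯₃ b) := by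
  rw [ofHat_eq_of a, ofHat_eq_of b, ofHat_eq_of (a ⨯₃ b), bracket, mul_fin_three, mul_fin_three,
    cross_apply]
  ext i j
  fin_cases i <;> fin_cases j <;> simp <;> ring

lemma Hb_eq_ofHat (I : Fin 3 → ℝ) (i : Fin 3) :
    Hb I i = ofHat ((√(I i))⁻¹ • Pi.single i 1) := by
  rw [ofHat_smul, Hb]
  congr 1
  fin_cases i <;> simp [ofHat]

lemma hat_add (A B : Matrix (Fin 3) (Fin 3) ℝ) : hat (A + B) = hat A + hat B := by
  funext j; fin_cases j <;> simp [hat]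

lemma hat_smul (t : ℝ) (A : Matrix (Fin 3) (Fin 3) ℝ) : hat (t • A) = t • hat A := by
  funext j; fin_cases j <;> simp [hat]

section innerI

variable (I : Fin 3 → ℝ)

lemma innerI_comm (A B : Matrix (Fin 3) (Fin 3) ℝ) : innerI I A B = innerI I B A := by
  simp only [innerI, mul_right_comm]

lemma innerI_add_right (A B C : Matrix (Fin 3) (Fin 3) ℝ) :
    innerI I A (B + C) = innerI I A B + innerI I A C := by
  simp only [innerI, hat_add, Pi.add_apply, mul_add, Finset.sum_add_distrib]

lemma innerI_smul_right (t : ℝ) (A B : Matrix (Fin 3) (Fin 3) ℝ) :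
    innerI I A (t • B) = t * innerI I A B := by
  simp only [innerI, hat_smul, Pi.smul_apply, smul_eq_mul, Finset.mul_sum]
  exact Finset.sum_congr rfl fun _ _ => by ring

lemma innerI_smul_left (t : ℝ) (A B : Matrix (Fin 3) (Fin 3) ℝ) :
    innerI I (t • A) B = t * innerI I A B := by
  rw [innerI_comm, innerI_smul_right, innerI_comm]

lemma innerI_sum_right {ι : Type*} (s : Finset ι) (A : Matrix (Fin 3) (Fin 3) ℝ)
    (B : ι → Matrix (Fin 3) (Fin 3) ℝ) : innerI I A (∑ i ∈ s, B i) = ∑ i ∈ s, innerI I A (B i) := by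
  classical
  induction s using Finset.induction_on with
  | empty => simp [innerI, hat, Fin.sum_univ_three]
  | insert i s hi ih => rw [Finset.sum_insert hi, Finset.sum_insert hi, innerI_add_right, ih]

lemma innerI_ofHat (a b : Fin 3 → ℝ) :
    innerI I (ofHat a) (ofHat b) = ∑ j, I j * a j * b j := by
  simp only [innerI, hat_ofHat]

lemma eq_of_innerI_ofHat_eq (hI : ∀ j, I j ≠ 0) {a b : Fin 3 → ℝ}
    (h : ∀ v, innerI I (ofHat a) (ofHat v) = innerI I (ofHat b) (ofHat v)) : a = b := by
  funext j
  have := h (Pi.single j 1)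
  simp only [innerI_ofHat, Pi.single_apply, mul_ite, mul_one, mul_zero, Finset.sum_ite_eq',
    Finset.mem_univ, if_true] at this
  exact mul_left_cancel₀ (hI j) this

end innerI

lemma innerI_koszul_add_swap {I : Fin 3 → ℝ}
    {N : Matrix (Fin 3) (Fin 3) ℝ → Matrix (Fin 3) (Fin 3) ℝ → Matrix (Fin 3) (Fin 3) ℝ}
    (hKoszul : ∀ a b c : Fin 3 → ℝ,
      2 * innerI I (N (ofHat a) (ofHat b)) (ofHat c) =
        innerI I (bracket (ofHat a) (ofHat b)) (ofHat c)
          - innerI I (bracket (ofHat b) (ofHat c)) (ofHat a)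
          + innerI I (bracket (ofHat c) (ofHat a)) (ofHat b))
    (a b c : Fin 3 → ℝ) :
    innerI I (ofHat c) (N (ofHat a) (ofHat b) + N (ofHat b) (ofHat a)) =
      innerI I (ofHat (c ⨯₃ b)) (ofHat a) + innerI I (ofHat (c ⨯₃ a)) (ofHat b) := by
  have hab := hKoszul a b c
  have hba := hKoszul b a c
  rw [innerI_add_right, innerI_comm, innerI_comm I (ofHat c)]
  simp only [bracket_ofHat, innerI_ofHat, cross_apply, Fin.sum_univ_three, cons_val] at hab hba ⊢
  linear_combination (hab + hba) / 2

/-- `⟨u, ∇^I_{[v,h]} h + ∇^I_h [v,h]⟩^I`, by `innerI_koszul_add_swap`. -/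
def koszulQuad (I u v h : Fin 3 → ℝ) : ℝ :=
  innerI I (ofHat (u ⨯₃ h)) (ofHat (v ⨯₃ h)) + innerI I (ofHat (u ⨯₃ (v ⨯₃ h))) (ofHat h)

lemma koszulQuad_smul (I u v h : Fin 3 → ℝ) (t : ℝ) :
    koszulQuad I u v (t • h) = t ^ 2 * koszulQuad I u v h := by
  simp only [koszulQuad, map_smul, ofHat_smul, innerI_smul_right, innerI_smul_left]
  ring

lemma sum_inv_mul_koszulQuad_single (I u v : Fin 3 → ℝ) (hI : ∀ j, I j ≠ 0) :
    ∑ i, (I i)⁻¹ * koszulQuad I u v (Pi.single i 1) =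
      innerI I (ofHat ((I 0 * I 1 * I 2)⁻¹ •
        ![(I 1 - I 2) ^ 2 * u 0, (I 2 - I 0) ^ 2 * u 1, (I 0 - I 1) ^ 2 * u 2])) (ofHat v) := by
  have := hI 0; have := hI 1; have := hI 2
  simp only [koszulQuad, innerI_ofHat, cross_apply, Fin.sum_univ_three, cons_val, Pi.smul_apply,
    smul_eq_mul, Pi.single_apply, Fin.reduceEq, if_true, if_false]
  field_simp
  ring

theorem so3_K_formula_general (I : Fin 3 → ℝ) (hI : ∀ j, 0 < I j)
    (N : Matrix (Fin 3) (Fin 3) ℝ → Matrix (Fin 3) (Fin 3) ℝ → Matrix (Fin 3) (Fin 3) ℝ)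
    (hKoszul : ∀ a b c : Fin 3 → ℝ,
      2 * innerI I (N (ofHat a) (ofHat b)) (ofHat c) =
        innerI I (bracket (ofHat a) (ofHat b)) (ofHat c)
          - innerI I (bracket (ofHat b) (ofHat c)) (ofHat a)
          + innerI I (bracket (ofHat c) (ofHat a)) (ofHat b))
    (u k : Fin 3 → ℝ)
    (hk : ∀ v : Fin 3 → ℝ,
      innerI I (ofHat k) (ofHat v) =
        - innerI I (ofHat u)
          ((1/2 : ℝ) • ∑ i : Fin 3, (N (bracket (ofHat v) (Hb I i)) (Hb I i)
            + N (Hb I i) (bracket (ofHat v) (Hb I i))))) :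
    ofHat k = (-(1 / (2 * (I 0 * I 1 * I 2)))) •
      (((I 1 - I 2) ^ 2 * u 0) • E1 + ((I 2 - I 0) ^ 2 * u 1) • E2 +
        ((I 0 - I 1) ^ 2 * u 2) • E3) := by
  have hI0 : ∀ j, I j ≠ 0 := fun j => (hI j).ne'
  have hpair : ∀ v, innerI I (ofHat k) (ofHat v) =
      -(1 / 2) * ∑ i, (I i)⁻¹ * koszulQuad I u v (Pi.single i 1) := by
    intro v
    rw [hk v, innerI_smul_right, innerI_sum_right, neg_mul_eq_neg_mul]
    congr 1
    refine Finset.sum_congr rfl fun i _ => ?_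
    rw [Hb_eq_ofHat, bracket_ofHat, innerI_koszul_add_swap hKoszul, ← koszulQuad, koszulQuad_smul,
      inv_pow, Real.sq_sqrt (hI i).le]
  have hrhs : (-(1 / (2 * (I 0 * I 1 * I 2)))) •
      (((I 1 - I 2) ^ 2 * u 0) • E1 + ((I 2 - I 0) ^ 2 * u 1) • E2 +
        ((I 0 - I 1) ^ 2 * u 2) • E3) = ofHat (-(1 / 2 : ℝ) • (I 0 * I 1 * I 2)⁻¹ •
          ![(I 1 - I 2) ^ 2 * u 0, (I 2 - I 0) ^ 2 * u 1, (I 0 - I 1) ^ 2 * u 2]) := by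
    rw [ofHat_smul, ofHat_smul, smul_smul]
    simp only [ofHat, cons_val]
    module
  rw [hrhs]
  congr 1
  refine eq_of_innerI_ofHat_eq I hI0 fun v => ?_
  rw [hpair, ofHat_smul, innerI_smul_left, sum_inv_mul_koszulQuad_single I u v hI0]

/-- With `H_i = E_i/√(I_i)` orthonormal for `⟨,⟩^I` and `K` defined by
`⟨K(u),v⟩^I = −⟨u, ½Σᵢ(∇^I_{ad_v H_i}H_i + ∇^I_{H_i}(ad_v H_i))⟩^I`,
one has `K(u) = −(1/(2I₁I₂I₃)) ((I₂−I₃)² u₁ E₁ + (I₃−I₁)² u₂ E₂ + (I₁−I₂)² u₃ E₃)`. -/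
theorem so3_K_formula (I : Fin 3 → ℝ) (hI : ∀ j, 0 < I j)
    (N : Matrix (Fin 3) (Fin 3) ℝ → Matrix (Fin 3) (Fin 3) ℝ → Matrix (Fin 3) (Fin 3) ℝ)
    (hrange : ∀ a b : Fin 3 → ℝ, ∃ d : Fin 3 → ℝ, N (ofHat a) (ofHat b) = ofHat d)
    (hKoszul : ∀ a b c : Fin 3 → ℝ,
      2 * innerI I (N (ofHat a) (ofHat b)) (ofHat c) =
        innerI I (bracket (ofHat a) (ofHat b)) (ofHat c)
          - innerI I (bracket (ofHat b) (ofHat c)) (ofHat a)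
          + innerI I (bracket (ofHat c) (ofHat a)) (ofHat b))
    (u k : Fin 3 → ℝ)
    (hk : ∀ v : Fin 3 → ℝ,
      innerI I (ofHat k) (ofHat v) =
        - innerI I (ofHat u)
          ((1/2 : ℝ) • ∑ i : Fin 3, (N (bracket (ofHat v) (Hb I i)) (Hb I i)
            + N (Hb I i) (bracket (ofHat v) (Hb I i))))) :
    ofHat k = (-(1 / (2 * (I 0 * I 1 * I 2)))) •
      (((I 1 - I 2) ^ 2 * u 0) • E1 + ((I 2 - I 0) ^ 2 * u 1) • E2 +
        ((I 0 - I 1) ^ 2 * u 2) • E3) :=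
  so3_K_formula_general I hI N hKoszul u k hk
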